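/- arXiv:2312.13011 — 2 statements merged into one kernel-verified Lean document; each statement's English description precedes it below -/
import Mathlib

section
/- Let H be a Hilbert space, F : U → ℝ C¹ on a neighborhood U of 0, and G : O → ℝ C¹ on a neighborhood O. Suppose x ∈ U and y_t := Π_K(x) + t∇F(x) ∈ O for all t ∈ [0,1], with Φ(y₁) = x, G(y_t) = F(Φ(y_t)), and ‖∇G(y_t)‖ ≤ C‖∇F(x)‖ for all t. Then |F(x) - G(Π_K(x))| ≤ C‖∇F(x)‖². -/
open Set

theorem norm_image_add_sub_le_of_hasFDerivAt_segment {E F : Type*}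
    [NormedAddCommGroup E] [NormedSpace ℝ E] [NormedAddCommGroup F] [NormedSpace ℝ F]
    {f : E → F} {f' : E → E →L[ℝ] F} {a v : E} {M : ℝ}
    (hf : ∀ t ∈ Icc (0 : ℝ) 1, HasFDerivAt f (f' (a + t • v)) (a + t • v))
    (hM : ∀ t ∈ Icc (0 : ℝ) 1, ‖f' (a + t • v)‖ ≤ M) :
    ‖f (a + v) - f a‖ ≤ M * ‖v‖ := by
  have hderiv : ∀ t ∈ Icc (0 : ℝ) 1,
      HasDerivWithinAt (fun t : ℝ => f (a + t • v)) (f' (a + t • v) v) (Icc 0 1) t := by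
    intro t ht
    have hpath : HasDerivAt (fun t : ℝ => a + t • v) v t := by
      simpa using ((hasDerivAt_id t).smul_const v).const_add a
    exact ((hf t ht).comp_hasDerivAt t hpath).hasDerivWithinAt
  have hbound : ∀ t ∈ Icc (0 : ℝ) 1, ‖f' (a + t • v) v‖ ≤ M * ‖v‖ := fun t ht =>
    (f' _).le_of_opNorm_le (hM t ht) v
  simpa using (convex_Icc (0 : ℝ) 1).norm_image_sub_le_of_norm_hasDerivWithin_le hderiv hbound
    (left_mem_Icc.2 zero_le_one) (right_mem_Icc.2 zero_le_one)

theorem stmt11_general {H : Type*} [NormedAddCommGroup H] [InnerProductSpace ℝ H]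
    (F G : H → ℝ) (gF gG : H → H) (PK : H → H) (Φ : H → H)
    (C : ℝ) (x : H)
    (hΦ : Φ (PK x + gF x) = x)
    (hGF : ∀ t ∈ Set.Icc (0 : ℝ) 1, G (PK x + t • gF x) = F (Φ (PK x + t • gF x)))
    (hgG : ∀ t ∈ Set.Icc (0 : ℝ) 1,
      HasFDerivAt G (innerSL ℝ (gG (PK x + t • gF x))) (PK x + t • gF x))
    (hbound : ∀ t ∈ Set.Icc (0 : ℝ) 1, ‖gG (PK x + t • gF x)‖ ≤ C * ‖gF x‖) :
    |F x - G (PK x)| ≤ C * ‖gF x‖ ^ 2 := by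
  have hend : G (PK x + gF x) = F x := by
    simpa [hΦ] using hGF 1 (right_mem_Icc.2 zero_le_one)
  have hmvt := norm_image_add_sub_le_of_hasFDerivAt_segment
    (f' := fun y => innerSL ℝ (gG y)) hgG
    fun t ht => by rw [innerSL_apply_norm]; exact hbound t ht
  rw [hend, Real.norm_eq_abs] at hmvt
  linarith [sq ‖gF x‖]

/-- (almost-Łojasiewicz estimate) With `y_t = Π_K(x) + t∇F(x) ∈ O` for
`t ∈ [0,1]`, `Φ(y₁) = x`, `G(y_t) = F(Φ(y_t))`, `G` differentiable along the path with
gradient `∇G`, and `‖∇G(y_t)‖ ≤ C‖∇F(x)‖`, one has `|F(x) - G(Π_K(x))| ≤ C‖∇F(x)‖²`. -/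
theorem stmt11 {H : Type*} [NormedAddCommGroup H] [InnerProductSpace ℝ H] [CompleteSpace H]
    (O : Set H) (F G : H → ℝ) (gF gG : H → H) (PK : H → H) (Φ : H → H)
    (C : ℝ) (hC : 0 < C) (x : H)
    (hyt : ∀ t ∈ Set.Icc (0 : ℝ) 1, PK x + t • gF x ∈ O)
    (hΦ : Φ (PK x + gF x) = x)
    (hGF : ∀ t ∈ Set.Icc (0 : ℝ) 1, G (PK x + t • gF x) = F (Φ (PK x + t • gF x)))
    (hgG : ∀ t ∈ Set.Icc (0 : ℝ) 1,
      HasFDerivAt G (innerSL ℝ (gG (PK x + t • gF x))) (PK x + t • gF x))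
    (hbound : ∀ t ∈ Set.Icc (0 : ℝ) 1, ‖gG (PK x + t • gF x)‖ ≤ C * ‖gF x‖) :
    |F x - G (PK x)| ≤ C * ‖gF x‖ ^ 2 :=
  stmt11_general F G gF gG PK Φ C x hΦ hGF hgG hbound
end

section
/- Let s ∈ ℂ and define the indicial polynomial relation I_s = I_0 + c + s(n-1-s-2r) for real constants c, n, r, where I_0 is a self-adjoint endomorphism of a finite-dimensional complex inner product space bounded below by i₀ ∈ ℝ. If s = (n-1)/2 + R - r with R ∈ ℂ and I_s is singular (has nontrivial kernel), then R² ∈ ℝ and R² ≥ i₀ + c + ((n-1)/2 - r)². -/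
/-- Indicial radius computation: if `I₀` is self-adjoint with `I₀ ≥ i₀·Id` on a
finite-dimensional complex inner product space, `s = (n-1)/2 + R - r`, and
`I_s = I₀ + c + s(n-1-s-2r)` is singular, then `R²` is real and
`R² ≥ i₀ + c + ((n-1)/2 - r)²`. -/
theorem stmt18 {E : Type*} [NormedAddCommGroup E] [InnerProductSpace ℂ E]
    [FiniteDimensional ℂ E]
    (I₀ : E →ₗ[ℂ] E)
    (hsym : ∀ u v : E, inner ℂ (I₀ u) v = (inner ℂ u (I₀ v) : ℂ))
    (i₀ c n r : ℝ)
    (hlow : ∀ u : E, i₀ * ‖u‖ ^ 2 ≤ (inner ℂ (I₀ u) u : ℂ).re)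
    (R : ℂ) (s : ℂ)
    (hs : s = ((n : ℂ) - 1) / 2 + R - (r : ℂ))
    (hsing : ∃ u : E, u ≠ 0 ∧
      I₀ u + ((c : ℂ) + s * ((n : ℂ) - 1 - s - 2 * (r : ℂ))) • u = 0) :
    (R ^ 2).im = 0 ∧ i₀ + c + ((n - 1) / 2 - r) ^ 2 ≤ (R ^ 2).re := by
  obtain ⟨u, hu, heq⟩ := hsing
  set a : ℝ := (n - 1) / 2 - r with ha
  have hu' : (0:ℝ) < ‖u‖ := norm_pos_iff.mpr hu
  have hm : (0:ℝ) < ‖u‖ ^ 2 := by positivity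
  set m : ℝ := ‖u‖ ^ 2 with hmdef
  set t : ℂ := inner ℂ (I₀ u) u with ht
  have htre : t = (t.re : ℂ) := by
    have h2 : (starRingEnd ℂ) t = t := by
      rw [ht, inner_conj_symm]
      exact (hsym u u).symm
    exact (Complex.conj_eq_iff_re.mp h2).symm
  have hK : (c : ℂ) + s * ((n:ℂ) - 1 - s - 2*(r:ℂ)) = (c:ℂ) + (a:ℂ)^2 - R^2 := by
    subst hs; rw [ha]; push_cast; ring
  have h1 : t + ((c:ℂ) + (a:ℂ)^2 - R^2) * (m:ℂ) = 0 := by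
    have h := congrArg (fun v => (inner ℂ u v : ℂ)) heq
    simp only [inner_add_right, inner_smul_right, inner_zero_right] at h
    rw [inner_self_eq_norm_sq_to_K, ← hsym u u, ← ht, hK] at h
    rw [hmdef]; push_cast; exact h
  have hm' : (m:ℂ) ≠ 0 := by exact_mod_cast hm.ne'
  have hR2 : R ^ 2 = ((c + a ^ 2 + t.re / m : ℝ) : ℂ) := by
    rw [htre] at h1
    push_cast
    field_simp at h1 ⊢
    linear_combination -h1
  rw [hR2]
  refine ⟨Complex.ofReal_im _, ?_⟩
  rw [Complex.ofReal_re]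
  have h3 : i₀ ≤ t.re / m := by
    rw [le_div_iff₀ hm]
    have := hlow u
    rw [← hmdef, ← ht] at this
    linarith
  linarith
end
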